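/- arXiv:2403.07878 — 2 statements merged into one kernel-verified Lean document; each statement's English description precedes it below -/
import Mathlib

section
/- For any even integer s, any integer t, and non-negative integer n: sum_{k=0}^n binom(n,k) * (-1)^k * L_s^(n-k) * F_{s(n+k+2)+t} / (k+1) = (L_s^(n+1) * F_{s(n+1)+t} - F_t) / (n+1), and the same identity holds with the inner F replaced by L and the right-hand side F's replaced by L's. -/
/-! For the shift `E` on sequences, a sequence with `G (k + 2) = L * G (k + 1) - G k` is fixed
by `E (L - E)`, hence by `E ^ m (L - E) ^ m`; expanding `(L - E) ^ m` binomially gives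
`∑ j, C(m, j) (-1) ^ j L ^ (m - j) G (m + j) = G 0`, and
`C(n, k) / (k + 1) = C(n + 1, k + 1) / (n + 1)` turns the case `m = n + 1` into the identity.

For even `s` both `k ↦ F (s k + t)` and `k ↦ L (s k + t)` are such sequences with `L = L_s`:
any `f` with the Fibonacci recurrence on `ℤ` satisfies `f (m + s) = F_s f (m + 1) + F_(s-1) f m`,
and `F_(-s) = -F_s`, `F_(-s-1) = F_(s+1)` give
`f (m + s) + f (m - s) = (F_(s-1) + F_(s+1)) f m = L_s f m`. -/

open Finset

/-- Lucas numbers on naturals. -/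
def lucasNat : ℕ → ℤ
  | 0 => 2
  | 1 => 1
  | n + 2 => lucasNat (n + 1) + lucasNat n

/-- Fibonacci numbers extended to integer indices: `F_{-m} = (-1)^(m-1) F_m`. -/
def fibZ (n : ℤ) : ℤ :=
  if 0 ≤ n then (Nat.fib n.toNat : ℤ) else (-1) ^ ((-n).toNat + 1) * (Nat.fib (-n).toNat : ℤ)

/-- Lucas numbers extended to integer indices: `L_{-m} = (-1)^m L_m`. -/
def lucasZ (n : ℤ) : ℤ :=
  if 0 ≤ n then lucasNat n.toNat else (-1) ^ (-n).toNat * lucasNat (-n).toNat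

def IsFibLike {R : Type*} [Add R] (f : ℤ → R) : Prop :=
  ∀ k, f (k + 2) = f (k + 1) + f k

namespace IsFibLike

variable {R : Type*} [CommRing R] {f g : ℤ → R}

theorem of_natCast_of_neg (hnat : ∀ n : ℕ, f (n + 2 : ℕ) = f (n + 1 : ℕ) + f n)
    (hneg_one : f 1 = f 0 + f (-1))
    (hneg : ∀ n : ℕ, f (-n) = f (-(n + 1 : ℕ)) + f (-(n + 2 : ℕ))) :
    IsFibLike f := by
  intro k
  obtain ⟨n, rfl | rfl⟩ := Int.eq_nat_or_neg k
  · exact_mod_cast hnat n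
  · match n with
    | 0 => simpa using hnat 0
    | 1 => simpa using hneg_one
    | n + 2 => convert hneg n using 2 <;> push_cast <;> ring_nf

theorem ext_zero_one (hf : IsFibLike f) (hg : IsFibLike g) (h0 : f 0 = g 0) (h1 : f 1 = g 1) :
    f = g := by
  suffices h : ∀ k, f k = g k ∧ f (k + 1) = g (k + 1) from funext fun k => (h k).1
  intro k
  induction k using Int.induction_on with
  | zero => simpa using ⟨h0, h1⟩
  | succ k ih => exact ⟨ih.2, by rw [add_assoc, one_add_one_eq_two, hf, hg, ih.1, ih.2]⟩
  | pred k ih =>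
    refine ⟨?_, by simpa using ih.1⟩
    have hf' := hf (-k - 1)
    have hg' := hg (-k - 1)
    ring_nf at hf' hg' ih ⊢
    linear_combination -hf' + hg' + ih.2 - ih.1

theorem comp_add_const (hf : IsFibLike f) (c : ℤ) : IsFibLike (fun k => f (k + c)) := fun k => by
  simpa only [add_right_comm] using hf (k + c)

theorem add (hf : IsFibLike f) (hg : IsFibLike g) : IsFibLike (fun k => f k + g k) := fun k => by
  dsimp only; rw [hf, hg]; ring

theorem mul_const (hf : IsFibLike f) (a : R) : IsFibLike (fun k => f k * a) := fun k => by
  dsimp only; rw [hf, add_mul]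

theorem intCast {f : ℤ → ℤ} (hf : IsFibLike f) : IsFibLike (fun k => (f k : R)) := fun k => by
  simp only [hf k, Int.cast_add]

end IsFibLike

theorem fibZ_natCast (n : ℕ) : fibZ n = Nat.fib n := by
  simp [fibZ]

theorem fibZ_neg_natCast (n : ℕ) : fibZ (-n) = (-1) ^ (n + 1) * Nat.fib n := by
  simp [fibZ]

theorem lucasZ_natCast (n : ℕ) : lucasZ n = lucasNat n := by
  simp [lucasZ]

theorem lucasZ_neg_natCast (n : ℕ) : lucasZ (-n) = (-1) ^ n * lucasNat n := by
  rcases n.eq_zero_or_pos with rfl | hn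
  · simp [lucasZ]
  · simp [lucasZ, hn.ne']

theorem isFibLike_fibZ : IsFibLike fibZ := by
  refine .of_natCast_of_neg (fun n => ?_) (by decide) (fun n => ?_)
  · rw [fibZ_natCast, fibZ_natCast, fibZ_natCast, Nat.fib_add_two, Nat.cast_add, add_comm]
  · simp only [fibZ_neg_natCast, Nat.fib_add_two]
    push_cast
    ring

theorem isFibLike_lucasZ : IsFibLike lucasZ := by
  refine .of_natCast_of_neg (fun n => ?_) (by decide) (fun n => ?_)
  · simp only [lucasZ_natCast]; rfl
  · simp only [lucasZ_neg_natCast, lucasNat]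
    ring

theorem fibZ_neg (n : ℤ) : fibZ (-n) = (-1) ^ (n.natAbs + 1) * fibZ n := by
  obtain ⟨m, rfl | rfl⟩ := Int.eq_nat_or_neg n
  · simp [fibZ_neg_natCast, fibZ_natCast]
  · rw [neg_neg, fibZ_neg_natCast, Int.natAbs_neg, Int.natAbs_natCast, ← mul_assoc, ← mul_pow]
    simp [fibZ_natCast]

theorem lucasZ_eq_fibZ_sub_one_add_fibZ_add_one (n : ℤ) :
    lucasZ n = fibZ (n - 1) + fibZ (n + 1) := by
  have h := isFibLike_lucasZ.ext_zero_one ((isFibLike_fibZ.comp_add_const (-1)).add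
    (isFibLike_fibZ.comp_add_const 1)) (by decide) (by decide)
  exact congrFun h n

namespace IsFibLike

variable {R : Type*} [CommRing R] {f : ℤ → R}

theorem apply_add (hf : IsFibLike f) (m s : ℤ) :
    f (m + s) = fibZ s * f (m + 1) + fibZ (s - 1) * f m := by
  have hF : IsFibLike (fun k => (fibZ k : R)) := isFibLike_fibZ.intCast
  have h := (hf.comp_add_const m).ext_zero_one ((hF.mul_const (f (m + 1))).add
    ((hF.comp_add_const (-1)).mul_const (f m))) (by norm_num [fibZ]) (by norm_num [fibZ, add_comm])
  simpa [add_comm m, mul_comm, sub_eq_add_neg] using congrFun h s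

theorem apply_add_add_apply_sub (hf : IsFibLike f) {s : ℤ} (hs : Even s) (m : ℤ) :
    f (m + s) + f (m - s) = lucasZ s * f m := by
  rw [sub_eq_add_neg, hf.apply_add m s, hf.apply_add m (-s), fibZ_neg, ← neg_add', fibZ_neg,
    hs.natAbs.add_one.neg_one_pow, hs.add_one.natAbs.add_one.neg_one_pow,
    lucasZ_eq_fibZ_sub_one_add_fibZ_add_one]
  push_cast
  ring

end IsFibLike

section ShiftRecurrence

variable {R : Type*} [CommRing R]

def seqShift : Module.End R (ℕ → R) := LinearMap.funLeft R R (· + 1)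

theorem seqShift_pow_apply (j : ℕ) (G : ℕ → R) (i : ℕ) :
    (seqShift ^ j) G i = G (i + j) := by
  induction j generalizing i with
  | zero => rfl
  | succ j ih =>
    rw [pow_succ', Module.End.mul_apply]
    exact (ih (i + 1)).trans (congrArg G (by omega))

theorem sum_choose_mul_neg_one_pow_mul_pow_mul_eq_apply_zero (L : R) (G : ℕ → R)
    (hG : ∀ k, G (k + 2) = L * G (k + 1) - G k) (m : ℕ) :
    ∑ j ∈ range (m + 1), (m.choose j : R) * (-1) ^ j * L ^ (m - j) * G (m + j) = G 0 := by
  set E : Module.End R (ℕ → R) := seqShift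
  have hfix : (E * (L • 1 - E)) G = G := by
    ext i
    simp [E, seqShift, hG, add_assoc]
  have hcomm : Commute E (L • 1 - E) :=
    ((Commute.one_right E).smul_right L).sub_right (Commute.refl E)
  have hpow : (E ^ m * ((-1 : R) • E + L • 1) ^ m) G = G := by
    rw [neg_one_smul R E, neg_add_eq_sub, ← hcomm.mul_pow, Module.End.pow_apply]
    exact Function.iterate_fixed hfix m
  rw [(((Commute.one_right _).smul_right L).smul_left (-1 : R)).add_pow, Module.End.mul_apply,
    LinearMap.sum_apply] at hpow
  rw [← congrFun hpow 0, seqShift_pow_apply, zero_add, Finset.sum_apply]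
  refine Finset.sum_congr rfl fun j _ => ?_
  simp only [smul_pow, one_pow, Algebra.mul_smul_comm, mul_one, Algebra.smul_mul_assoc,
    LinearMap.smul_apply, Module.End.mul_apply, Module.End.natCast_apply, nsmul_eq_mul,
    Pi.smul_apply, seqShift_pow_apply, Pi.mul_apply, Pi.natCast_apply, smul_eq_mul, E]
  ring

end ShiftRecurrence

theorem sum_choose_mul_neg_one_pow_mul_pow_div_add_one {K : Type*} [Field K] [CharZero K]
    (L : K) (G : ℕ → K) (hG : ∀ k, G (k + 2) = L * G (k + 1) - G k) (n : ℕ) :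
    ∑ k ∈ range (n + 1), (n.choose k : K) * (-1) ^ k * L ^ (n - k) * G (n + k + 2) / (k + 1) =
      (L ^ (n + 1) * G (n + 1) - G 0) / (n + 1) := by
  have hterm : ∀ k ∈ range (n + 1),
      (n.choose k : K) * (-1) ^ k * L ^ (n - k) * G (n + k + 2) / (k + 1) =
        -(((n + 1).choose (k + 1) : K) * (-1) ^ (k + 1) * L ^ (n + 1 - (k + 1)) *
          G (n + 1 + (k + 1))) / (n + 1) := by
    intro k _
    have hk : (k + 1 : K) ≠ 0 := Nat.cast_add_one_ne_zero k
    have hn : (n + 1 : K) ≠ 0 := Nat.cast_add_one_ne_zero n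
    have hchoose : ((n + 1).choose (k + 1) : K) = (n + 1) * n.choose k / (k + 1) := by
      rw [eq_div_iff hk]
      exact_mod_cast (Nat.add_one_mul_choose_eq n k).symm
    rw [hchoose, Nat.add_sub_add_right, show n + 1 + (k + 1) = n + k + 2 by ring]
    field_simp
    ring
  have hsum := sum_choose_mul_neg_one_pow_mul_pow_mul_eq_apply_zero L G hG (n + 1)
  rw [sum_range_succ'] at hsum
  rw [sum_congr rfl hterm, ← sum_div, sum_neg_distrib, ← hsum]
  simp only [Nat.choose_zero_right, Nat.cast_one, pow_zero, one_mul, Nat.sub_zero, add_zero]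
  ring

theorem IsFibLike.sum_choose_mul_neg_one_pow_mul_lucasZ_pow_div_add_one {K : Type*} [Field K]
    [CharZero K] {f : ℤ → K} (hf : IsFibLike f) {s : ℤ} (hs : Even s) (t : ℤ) (n : ℕ) :
    ∑ k ∈ range (n + 1), (n.choose k : K) * (-1) ^ k * (lucasZ s : K) ^ (n - k) *
        f (s * ((n : ℤ) + k + 2) + t) / (k + 1) =
      ((lucasZ s : K) ^ (n + 1) * f (s * (n + 1) + t) - f t) / (n + 1) := by
  have hG : ∀ k : ℕ,
      f (s * (k + 2 : ℕ) + t) = lucasZ s * f (s * (k + 1 : ℕ) + t) - f (s * k + t) := by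
    intro k
    rw [eq_sub_iff_add_eq, ← hf.apply_add_add_apply_sub hs]
    push_cast
    ring_nf
  simpa using
    sum_choose_mul_neg_one_pow_mul_pow_div_add_one (lucasZ s : K) (fun k => f (s * k + t)) hG n

theorem stmt_13 (s t : ℤ) (hs : Even s) (n : ℕ) :
    (∑ k ∈ range (n + 1),
      (n.choose k : ℚ) * (-1) ^ k * (lucasZ s : ℚ) ^ (n - k) * (fibZ (s * ((n : ℤ) + k + 2) + t) : ℚ) / (k + 1) =
      ((lucasZ s : ℚ) ^ (n + 1) * (fibZ (s * (n + 1) + t) : ℚ) - fibZ t) / (n + 1)) ∧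
    (∑ k ∈ range (n + 1),
      (n.choose k : ℚ) * (-1) ^ k * (lucasZ s : ℚ) ^ (n - k) * (lucasZ (s * ((n : ℤ) + k + 2) + t) : ℚ) / (k + 1) =
      ((lucasZ s : ℚ) ^ (n + 1) * (lucasZ (s * (n + 1) + t) : ℚ) - lucasZ t) / (n + 1)) :=
  ⟨isFibLike_fibZ.intCast.sum_choose_mul_neg_one_pow_mul_lucasZ_pow_div_add_one hs t n,
    isFibLike_lucasZ.intCast.sum_choose_mul_neg_one_pow_mul_lucasZ_pow_div_add_one hs t n⟩
end

section
/- For any even integer s, any integer t, and non-negative integer n: sum_{k=0}^n binom(n,k) * (-1)^k * L_s^(n-k) * F_{s(n+k+4)+t} / ((k+1)(k+2)) = -(L_s^(n+1) * F_{s(n+1)+t} - F_t) / ((n+1)(n+2)) + L_s^(n+1) * F_{s(n+3)+t} / (n+2). -/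
/-!
For even `s` the sequence `g a = F_{s a + t}` satisfies `g (a + 1) + g (a - 1) = L_s g a`, which
follows from Binet's formula since `φ^{-s} = ψ^s` when `s` is even. Writing this recurrence as
`E⁻¹ = L_s - E` for the shift operator `E` and expanding `E^{-(n+2)} = (L_s - E)^{n+2}`
binomially expresses `F_t` through `F_{s(n+k+4)+t}`; the weights `C(n,k) / ((k+1)(k+2))` are
`C(n+2,k+2) / ((n+1)(n+2))`, and the two terms `k = 0, 1` left over give the right-hand side.
-/

open Finset

open Real goldenRatio

theorem fibZ_eq_intFib (n : ℤ) : fibZ n = Int.fib n := by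
  unfold fibZ
  split_ifs with h
  · rw [Int.fib_of_nonneg h]
  · rw [← Int.fib_neg_natCast, Int.toNat_of_nonneg (by omega), neg_neg]

theorem cast_lucasNat_eq : ∀ n : ℕ, (lucasNat n : ℝ) = φ ^ n + ψ ^ n
  | 0 => by norm_num [lucasNat]
  | 1 => by simp [lucasNat]
  | n + 2 => by
    rw [lucasNat, Int.cast_add, cast_lucasNat_eq (n + 1), cast_lucasNat_eq n]
    linear_combination (-φ ^ n) * goldenRatio_sq - ψ ^ n * goldenConj_sq

theorem cast_lucasZ_eq (n : ℤ) : (lucasZ n : ℝ) = φ ^ n + ψ ^ n := by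
  unfold lucasZ
  split_ifs with h
  · rw [cast_lucasNat_eq, ← zpow_natCast, ← zpow_natCast, Int.toNat_of_nonneg h]
  · obtain ⟨m, rfl⟩ : ∃ m : ℕ, n = -m := ⟨(-n).toNat, by omega⟩
    simp only [neg_neg, Int.toNat_natCast, Int.cast_mul, Int.cast_pow, Int.cast_neg, Int.cast_one,
      cast_lucasNat_eq, zpow_neg, zpow_natCast, ← inv_pow, inv_goldenRatio, inv_goldenConj,
      neg_pow ψ, neg_pow φ]
    ring

theorem Int.fib_add_add_fib_sub_of_even {s : ℤ} (hs : Even s) (m : ℤ) :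
    Int.fib (m + s) + Int.fib (m - s) = lucasZ s * Int.fib m := by
  have hφ : φ ^ (-s) = ψ ^ s := by rw [zpow_neg, ← inv_zpow, inv_goldenRatio, hs.neg_zpow]
  have hψ : ψ ^ (-s) = φ ^ s := by rw [zpow_neg, ← inv_zpow, inv_goldenConj, hs.neg_zpow]
  apply Int.cast_injective (α := ℝ)
  push_cast
  simp only [coe_intFib_eq, cast_lucasZ_eq, sub_eq_add_neg m s, zpow_add₀ goldenRatio_ne_zero,
    zpow_add₀ goldenConj_ne_zero, hφ, hψ]
  ring

theorem Nat.cast_choose_div_add_one_mul_add_two {K : Type*} [Field K] [CharZero K] (n k : ℕ) :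
    (n.choose k : K) / ((k + 1) * (k + 2)) =
      ((n + 2).choose (k + 2) : K) / ((n + 1) * (n + 2)) := by
  have h₁ : ((n : K) + 1) * n.choose k = (n + 1).choose (k + 1) * (k + 1) := by
    exact_mod_cast Nat.add_one_mul_choose_eq n k
  have h₂ : ((n : K) + 2) * (n + 1).choose (k + 1) = (n + 2).choose (k + 2) * (k + 2) := by
    exact_mod_cast Nat.add_one_mul_choose_eq (n + 1) (k + 1)
  rw [div_eq_div_iff (by norm_cast) (by norm_cast)]
  linear_combination (n + 2 : K) * h₁ + (k + 1 : K) * h₂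

theorem sum_choose_mul_shift_eq_of_recurrence {R : Type*} [CommRing R] (L : R) {g : ℤ → R}
    (hg : ∀ a, g (a + 1) + g (a - 1) = L * g a) (m : ℕ) (a : ℤ) :
    ∑ j ∈ range (m + 1), (m.choose j : R) * (-1) ^ j * L ^ (m - j) * g (a + j) = g (a - m) := by
  induction m generalizing a with
  | zero => simp
  | succ m ih =>
    have pascal := sum_choose_succ_mul (fun j k => (-1) ^ j * L ^ k * g (a + j)) m
    have h₁ : ∑ j ∈ range (m + 1),
        (m.choose j : R) * ((-1) ^ j * L ^ (m + 1 - j) * g (a + j)) = L * g (a - m) := by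
      rw [← ih, mul_sum]
      refine sum_congr rfl fun j hj => ?_
      rw [Nat.sub_add_comm (Nat.lt_succ_iff.mp (mem_range.mp hj)), pow_succ]
      ring
    have h₂ : ∑ j ∈ range (m + 1),
        (m.choose j : R) * ((-1) ^ (j + 1) * L ^ (m - j) * g (a + ↑(j + 1))) =
          -g (a + 1 - m) := by
      rw [← ih, ← sum_neg_distrib]
      refine sum_congr rfl fun j _ => ?_
      rw [show a + ↑(j + 1) = a + 1 + j by push_cast; ring]
      ring
    simp only [mul_assoc] at pascal h₁ h₂ ⊢
    rw [pascal, h₁, h₂, ← hg (a - m), show a - m + 1 = a + 1 - m by ring,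
      show a - ((m + 1 : ℕ) : ℤ) = a - m - 1 by push_cast; ring]
    ring

theorem sum_choose_div_mul_shift_eq_of_recurrence {K : Type*} [Field K] [CharZero K] (L : K)
    {g : ℤ → K} (hg : ∀ a, g (a + 1) + g (a - 1) = L * g a) (n : ℕ) :
    ∑ k ∈ range (n + 1),
      (n.choose k : K) * (-1) ^ k * L ^ (n - k) * g (n + k + 4) / ((k + 1) * (k + 2)) =
    -((L ^ (n + 1) * g (n + 1) - g 0) / ((n + 1) * (n + 2))) +
      L ^ (n + 1) * g (n + 3) / (n + 2) := by
  have expansion := sum_choose_mul_shift_eq_of_recurrence L hg (n + 2) (n + 2)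
  rw [sum_range_succ', sum_range_succ'] at expansion
  have reindex : ∑ k ∈ range (n + 1),
      (n.choose k : K) * (-1) ^ k * L ^ (n - k) * g (n + k + 4) / ((k + 1) * (k + 2)) =
      (∑ k ∈ range (n + 1), ((n + 2).choose (k + 1 + 1) : K) * (-1) ^ (k + 1 + 1) *
        L ^ (n + 2 - (k + 1 + 1)) * g (n + 2 + ↑(k + 1 + 1))) / ((n + 1) * (n + 2)) := by
    rw [sum_div]
    refine sum_congr rfl fun k _ => ?_
    have hc := Nat.cast_choose_div_add_one_mul_add_two (K := K) n k
    rw [show n + 2 - (k + 1 + 1) = n - k by omega,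
      show (n : ℤ) + 2 + ((k + 1 + 1 : ℕ) : ℤ) = n + k + 4 by push_cast; ring]
    calc _ = (n.choose k : K) / ((k + 1) * (k + 2)) * ((-1) ^ k * L ^ (n - k) * g (n + k + 4)) :=
          by ring
      _ = _ := by rw [hc]; ring
  rw [show (n : ℤ) + 2 + ((0 + 1 : ℕ) : ℤ) = n + 3 by push_cast; ring,
    show (n : ℤ) + 2 + ((0 : ℕ) : ℤ) = n + 2 by push_cast; ring,
    show (n : ℤ) + 2 - ((n + 2 : ℕ) : ℤ) = 0 by push_cast; ring] at expansion
  have hrec := hg (n + 2)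
  rw [show (n : ℤ) + 2 + 1 = n + 3 by ring, show (n : ℤ) + 2 - 1 = n + 1 by ring] at hrec
  rw [reindex, eq_sub_of_add_eq (eq_sub_of_add_eq expansion)]
  simp only [Nat.choose_zero_right, Nat.choose_one_right, zero_add, pow_zero, pow_one,
    Nat.sub_zero, Nat.cast_one, Nat.cast_add, Nat.cast_ofNat, show n + 2 - 1 = n + 1 from rfl]
  have h₁ : (n : K) + 1 ≠ 0 := by norm_cast
  have h₂ : (n : K) + 2 ≠ 0 := by norm_cast
  field_simp
  linear_combination L ^ (n + 1) * hrec

theorem stmt_18 (s t : ℤ) (hs : Even s) (n : ℕ) :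
    ∑ k ∈ range (n + 1),
      (n.choose k : ℚ) * (-1) ^ k * (lucasZ s : ℚ) ^ (n - k) *
        (fibZ (s * ((n : ℤ) + k + 4) + t) : ℚ) / ((k + 1) * (k + 2)) =
    -(((lucasZ s : ℚ) ^ (n + 1) * (fibZ (s * (n + 1) + t) : ℚ) - fibZ t) / ((n + 1) * (n + 2))) +
    (lucasZ s : ℚ) ^ (n + 1) * (fibZ (s * (n + 3) + t) : ℚ) / (n + 2) := by
  have hg (a : ℤ) : (fibZ (s * (a + 1) + t) : ℚ) + fibZ (s * (a - 1) + t) =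
      lucasZ s * fibZ (s * a + t) := by
    have h := Int.fib_add_add_fib_sub_of_even hs (s * a + t)
    rw [show s * a + t + s = s * (a + 1) + t by ring,
      show s * a + t - s = s * (a - 1) + t by ring] at h
    simp only [fibZ_eq_intFib]
    exact_mod_cast h
  simpa only [mul_zero, zero_add] using
    sum_choose_div_mul_shift_eq_of_recurrence (g := fun a => (fibZ (s * a + t) : ℚ)) _ hg n
end
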